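/- Let A be a rank-d set system on S, V = V(A) its generic representation, and φ : k[x_1,...,x_d] → B(V) the algebra homomorphism sending x_j to ∑_{s∈S} v_{j,s} y_s, where B(V) is the quotient of k[y_s : s ∈ S] by the squares y_s^2 and the products ∏_{s∈T} y_s over cocircuits T of M(A). Then every monomial x^q with exponent vector q ∈ ℕ^d not in the parking polymatroid P(A) lies in the kernel of φ. -/
import Mathlib


open Finset MvPolynomial
attribute [local instance] Classical.propDecidable

variable {S : Type*} [Fintype S] [DecidableEq S]

/-- `T` is a partial transversal of the set system `A = (A j : j ∈ [d])`:
its elements can be matched injectively to distinct members of `A` containing them. -/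
def IsPT {d : ℕ} (A : Fin d → Finset S) (T : Finset S) : Prop :=
  ∃ f : S → Fin d, Set.InjOn f ↑T ∧ ∀ s ∈ T, s ∈ A (f s)

/-- Rank function of the transversal matroid `M(A)`:
the maximum size of a partial transversal contained in `T`. -/
noncomputable def tRk {d : ℕ} (A : Fin d → Finset S) (T : Finset S) : ℕ :=
  (T.powerset.filter (IsPT A)).sup Finset.card

/-- Rank function of the dual matroid `M(A)*`: `rk*(T) = rk(S∖T) + |T| − rk(S)`. -/
noncomputable def dualRk {d : ℕ} (A : Fin d → Finset S) (T : Finset S) : ℕ :=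
  tRk A Tᶜ + T.card - tRk A (univ : Finset S)

/-- Lattice points of the parking polymatroid `P(A)`. -/
def inP {d : ℕ} (A : Fin d → Finset S) (q : Fin d →₀ ℕ) : Prop :=
  ∀ J : Finset (Fin d), ∑ j ∈ J, q j ≤ dualRk A (J.biUnion A)

/-- Rank function of the matroid of a vector configuration:
the columns `v_s` of the matrix `V`. -/
noncomputable def vRk {k : Type*} [Field k] {d : ℕ} (V : Matrix (Fin d) S k) (T : Finset S) : ℕ :=
  Module.finrank k (Submodule.span k ((fun s j => V j s) '' (T : Set S)))

/-- The power ideal `I(V)`, generated by `ℓ_H ^ ρ_H` over all hyperplanes `H` of `V`: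
a hyperplane is cut out by a nonzero linear form `ℓ` such that the vectors it kills span a
rank-`(d−1)` subspace, and `ρ_H` is the number of vectors of `V` outside `H`. -/
noncomputable def powerIdeal {k : Type*} [Field k] {d : ℕ} (V : Matrix (Fin d) S k) :
    Ideal (MvPolynomial (Fin d) k) :=
  Ideal.span { p | ∃ ℓ : Fin d → k, ℓ ≠ 0 ∧
    vRk V ((univ : Finset S).filter fun s => ∑ j, ℓ j * V j s = 0) = d - 1 ∧
    p = (∑ j, C (ℓ j) * X j) ^ (((univ : Finset S).filter fun s => ¬ (∑ j, ℓ j * V j s = 0)).card) }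

/-- `T` is a cocircuit of the transversal matroid `M(A)`:
the complement of a hyperplane flat of `M(A)`. -/
noncomputable def IsCocircuitA {d : ℕ} (A : Fin d → Finset S) (T : Finset S) : Prop :=
  tRk A Tᶜ = tRk A (univ : Finset S) - 1 ∧
    ∀ s ∈ T, tRk A (insert s Tᶜ) = tRk A (univ : Finset S)

/-- The ideal of relations defining the squarefree algebra `B(V)`:
squares of variables together with the cocircuit monomials of `M(A)`. -/
noncomputable def relIdealA (k : Type*) [Field k] {d : ℕ} (A : Fin d → Finset S) :
    Ideal (MvPolynomial S k) :=
  Ideal.span ({ p | ∃ s : S, p = X s ^ 2 } ∪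
    { p | ∃ T : Finset S, IsCocircuitA A T ∧ p = ∏ s ∈ T, X s })

set_option linter.unusedSectionVars false

lemma isPT_subset {d : ℕ} {A : Fin d → Finset S} {T T' : Finset S} (h : IsPT A T)
    (hsub : T' ⊆ T) : IsPT A T' := by
  obtain ⟨f, hinj, hmem⟩ := h
  exact ⟨f, hinj.mono (by exact_mod_cast hsub), fun s hs => hmem s (hsub hs)⟩

lemma tRk_mono {d : ℕ} (A : Fin d → Finset S) {T U : Finset S} (h : T ⊆ U) :
    tRk A T ≤ tRk A U := by
  apply Finset.sup_mono
  apply Finset.filter_subset_filter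
  exact Finset.powerset_mono.mpr h

lemma le_tRk_of_PT {d : ℕ} (A : Fin d → Finset S) {T P : Finset S} (hP : P ⊆ T)
    (h : IsPT A P) : P.card ≤ tRk A T :=
  Finset.le_sup (by simp [Finset.mem_filter, Finset.mem_powerset, hP, h])

lemma tRk_le_card {d : ℕ} (A : Fin d → Finset S) (T : Finset S) : tRk A T ≤ T.card := by
  apply Finset.sup_le
  intro P hP
  simp only [Finset.mem_filter, Finset.mem_powerset] at hP
  exact Finset.card_le_card hP.1

lemma tRk_insert_le {d : ℕ} (A : Fin d → Finset S) (T : Finset S) (s : S) :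
    tRk A (insert s T) ≤ tRk A T + 1 := by
  apply Finset.sup_le
  intro P hP
  simp only [Finset.mem_filter, Finset.mem_powerset] at hP
  have h1 : P.erase s ⊆ T := by
    intro x hx
    rcases Finset.mem_erase.mp hx with ⟨hxs, hxP⟩
    rcases Finset.mem_insert.mp (hP.1 hxP) with h | h
    · exact absurd h hxs
    · exact h
  have h2 : (P.erase s).card ≤ tRk A T :=
    le_tRk_of_PT A h1 (isPT_subset hP.2 (Finset.erase_subset _ _))
  have h3 : P.card ≤ (P.erase s).card + 1 := by
    have := Finset.pred_card_le_card_erase (s := P) (a := s)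
    omega
  omega

lemma tRk_union_le {d : ℕ} (A : Fin d → Finset S) (T U : Finset S) :
    tRk A (T ∪ U) ≤ tRk A T + U.card := by
  induction U using Finset.induction_on with
  | empty => simp
  | @insert a U hnotmem ih =>
    have : T ∪ insert a U = insert a (T ∪ U) := by
      ext x; simp [Finset.mem_insert, Finset.mem_union, or_left_comm, or_comm]
    rw [this, Finset.card_insert_of_notMem hnotmem]
    calc tRk A (insert a (T ∪ U)) ≤ tRk A (T ∪ U) + 1 := tRk_insert_le A _ a
    _ ≤ tRk A T + U.card + 1 := by omega

lemma dualRk_mono {d : ℕ} (A : Fin d → Finset S) {T U : Finset S} (h : T ⊆ U) :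
    dualRk A T ≤ dualRk A U := by
  have key : tRk A Tᶜ + T.card ≤ tRk A Uᶜ + U.card := by
    have h1 : Tᶜ = Uᶜ ∪ (U \ T) := by
      ext x
      simp only [Finset.mem_compl, Finset.mem_union, Finset.mem_sdiff]
      constructor
      · intro hx
        by_cases hxU : x ∈ U
        · exact Or.inr ⟨hxU, hx ∘ (fun h' => h')⟩
        · exact Or.inl hxU
      · rintro (hx | ⟨hxU, hxT⟩)
        · exact fun hT => hx (h hT)
        · exact hxT
    have h2 : tRk A Tᶜ ≤ tRk A Uᶜ + (U \ T).card := h1 ▸ tRk_union_le A Uᶜ (U \ T)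
    have h3 : (U \ T).card + T.card = U.card := Finset.card_sdiff_add_card_eq_card h
    omega
  unfold dualRk
  omega

lemma exists_cocircuit {d : ℕ} (A : Fin d → Finset S) {T : Finset S}
    (h : tRk A Tᶜ < tRk A (univ : Finset S)) :
    ∃ T' ⊆ T, IsCocircuitA A T' := by
  classical
  set D := tRk A (univ : Finset S) with hD
  have hne : ((univ : Finset S).powerset.filter
      (fun F => Tᶜ ⊆ F ∧ tRk A F < D)).Nonempty :=
    ⟨Tᶜ, by simp [Finset.mem_filter, h]⟩
  obtain ⟨F, hF, hFmax⟩ := Finset.exists_max_image _ Finset.card hne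
  simp only [Finset.mem_filter, Finset.mem_powerset] at hF
  obtain ⟨-, hFT, hFrk⟩ := hF
  have hins : ∀ s ∉ F, tRk A (insert s F) = D := by
    intro s hs
    have hle : tRk A (insert s F) ≤ D := tRk_mono A (Finset.subset_univ _)
    by_contra hne'
    have hlt : tRk A (insert s F) < D := lt_of_le_of_ne hle hne'
    have hmem : insert s F ∈ (univ : Finset S).powerset.filter
        (fun F => Tᶜ ⊆ F ∧ tRk A F < D) := by
      simp only [Finset.mem_filter, Finset.mem_powerset]
      exact ⟨Finset.subset_univ _, hFT.trans (Finset.subset_insert s F), hlt⟩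
    have := hFmax _ hmem
    rw [Finset.card_insert_of_notMem hs] at this
    omega
  have hFneq : F ≠ univ := fun heq => by rw [heq] at hFrk; omega
  obtain ⟨s₀, hs₀⟩ : ∃ s, s ∉ F := by
    by_contra hc
    push_neg at hc
    exact hFneq (Finset.eq_univ_of_forall hc)
  have hFrk' : tRk A F = D - 1 := by
    have := tRk_insert_le A F s₀
    rw [hins s₀ hs₀] at this
    omega
  refine ⟨Fᶜ, ?_, ?_, ?_⟩
  · intro x hx
    rw [Finset.mem_compl] at hx
    by_contra hxT
    exact hx (hFT (Finset.mem_compl.mpr hxT))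
  · rw [compl_compl]; exact hFrk'
  · intro s hs
    rw [compl_compl]
    exact hins s (Finset.mem_compl.mp hs)

/-- Every monomial `x^q` with `q` outside the parking polymatroid `P(A)` lies in the kernel
of `φ : x_j ↦ ∑_s v_{j,s} y_s` into the squarefree algebra `B(V)`. -/
theorem stmt7 {d : ℕ} (A : Fin d → Finset S) (hrank : tRk A (univ : Finset S) = d)
    (V : Matrix (Fin d) S ℝ) (hz : ∀ j s, V j s = 0 ↔ s ∉ A j)
    (halg : AlgebraicIndependent ℚ
      (fun p : {p : Fin d × S // p.2 ∈ A p.1} => V p.1.1 p.1.2))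
    (q : Fin d →₀ ℕ) (hq : ¬ inP A q) :
    aeval (fun j => Ideal.Quotient.mk (relIdealA ℝ A) (∑ s, C (V j s) * X s))
      (monomial q (1 : ℝ)) = 0 := by
  classical
  obtain ⟨J, hJ⟩ : ∃ J : Finset (Fin d), dualRk A (J.biUnion A) < ∑ j ∈ J, q j := by
    unfold inP at hq; push_neg at hq; exact hq
  -- reduce to ideal membership
  have hred : aeval (fun j => Ideal.Quotient.mk (relIdealA ℝ A) (∑ s, C (V j s) * X s))
      (monomial q (1 : ℝ)) =
      Ideal.Quotient.mk (relIdealA ℝ A) (∏ j, (∑ s, C (V j s) * X s) ^ q j) := by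
    rw [aeval_monomial, map_one, one_mul]
    rw [Finsupp.prod_fintype _ _ (fun i => pow_zero _)]
    rw [map_prod]
    simp only [map_pow]
  rw [hred, Ideal.Quotient.eq_zero_iff_mem]
  -- rewrite as product over sigma type
  have hsig : (∏ j, (∑ s, C (V j s) * X s) ^ q j : MvPolynomial S ℝ)
      = ∏ p : Σ j : Fin d, Fin (q j), ∑ s, C (V p.1 s) * X s := by
    rw [← Finset.univ_sigma_univ, Finset.prod_sigma]
    simp
  rw [hsig, Finset.prod_univ_sum (fun _ => (univ : Finset S))]
  apply Ideal.sum_mem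
  intro g _
  -- g : (Σ j, Fin (q j)) → S
  by_cases hinj : Function.Injective g
  · by_cases hV : ∀ p : Σ j : Fin d, Fin (q j), V p.1 (g p) ≠ 0
    · -- squarefree transversal term: contains a cocircuit
      set T : Finset S := Finset.image g univ with hT
      have hmemA : ∀ p : Σ j : Fin d, Fin (q j), g p ∈ A p.1 := by
        intro p
        by_contra hc
        exact hV p ((hz p.1 (g p)).mpr hc)
      -- T contains a cocircuit
      have hTrk : tRk A Tᶜ < tRk A (univ : Finset S) := by
        by_contra hc
        push_neg at hc
        have hTrk' : tRk A Tᶜ = tRk A (univ : Finset S) :=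
          le_antisymm (tRk_mono A (Finset.subset_univ _)) hc
        set TJ : Finset S := Finset.image g (univ.filter (fun p => p.1 ∈ J)) with hTJ
        have hTJsub : TJ ⊆ T := Finset.image_subset_image (Finset.filter_subset _ _)
        have hTJcard : TJ.card = ∑ j ∈ J, q j := by
          rw [hTJ, Finset.card_image_of_injective _ hinj]
          have : (univ.filter (fun p : Σ j : Fin d, Fin (q j) => p.1 ∈ J))
              = J.sigma (fun j => (univ : Finset (Fin (q j)))) := by
            ext ⟨j, i⟩
            simp [Finset.mem_sigma]
          rw [this, Finset.card_sigma]
          simp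
        have hTJB : TJ ⊆ J.biUnion A := by
          intro x hx
          rw [hTJ] at hx
          obtain ⟨p, hp, rfl⟩ := Finset.mem_image.mp hx
          simp only [Finset.mem_filter] at hp
          exact Finset.mem_biUnion.mpr ⟨p.1, hp.2, hmemA p⟩
        have hTJrk : tRk A TJᶜ = tRk A (univ : Finset S) :=
          le_antisymm (tRk_mono A (Finset.subset_univ _))
            (hTrk' ▸ tRk_mono A (Finset.compl_subset_compl.mpr hTJsub))
        have hdTJ : dualRk A TJ = TJ.card := by
          unfold dualRk
          rw [hTJrk]
          omega
        have := dualRk_mono A hTJB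
        omega
      obtain ⟨T', hT'sub, hT'cc⟩ := exists_cocircuit A hTrk
      -- the term is divisible by the cocircuit monomial
      have hdvd : (∏ s ∈ T', X s : MvPolynomial S ℝ) ∣
          ∏ p : Σ j : Fin d, Fin (q j), (C (V p.1 (g p)) * X (g p)) := by
        have h1 : (∏ p : Σ j : Fin d, Fin (q j), (C (V p.1 (g p)) * X (g p)) : MvPolynomial S ℝ)
            = (∏ p : Σ j : Fin d, Fin (q j), C (V p.1 (g p))) * ∏ s ∈ T, X s := by
          rw [Finset.prod_mul_distrib, hT, Finset.prod_image (fun a _ b _ h => hinj h)]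
        rw [h1]
        apply Dvd.dvd.mul_left
        exact Finset.prod_dvd_prod_of_subset _ _ _ hT'sub
      exact Ideal.mem_of_dvd _ hdvd (Ideal.subset_span (Or.inr ⟨T', hT'cc, rfl⟩))
    · -- some coefficient vanishes: term is zero
      push_neg at hV
      obtain ⟨p, hp⟩ := hV
      have : (∏ r : Σ j : Fin d, Fin (q j), (C (V r.1 (g r)) * X (g r)) : MvPolynomial S ℝ) = 0 :=
        Finset.prod_eq_zero (Finset.mem_univ p) (by rw [hp, map_zero, zero_mul])
      rw [this]
      exact Ideal.zero_mem _
  · -- non-injective: divisible by a square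
    rw [Function.not_injective_iff] at hinj
    obtain ⟨p, p', hgg, hne⟩ := hinj
    set s := g p with hs
    have hdvd : (X s ^ 2 : MvPolynomial S ℝ) ∣
        ∏ p : Σ j : Fin d, Fin (q j), (C (V p.1 (g p)) * X (g p)) := by
      have h1 : (∏ r : Σ j : Fin d, Fin (q j), (C (V r.1 (g r)) * X (g r)) : MvPolynomial S ℝ)
          = (C (V p.1 (g p)) * X (g p)) * ((C (V p'.1 (g p')) * X (g p')) *
            ∏ r ∈ (univ.erase p).erase p', (C (V r.1 (g r)) * X (g r))) := by
        rw [← Finset.mul_prod_erase _ _ (Finset.mem_univ p),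
          ← Finset.mul_prod_erase _ _ (Finset.mem_erase.mpr ⟨Ne.symm hne, Finset.mem_univ p'⟩)]
      rw [h1, pow_two, ← hgg]
      exact mul_dvd_mul (Dvd.intro_left _ rfl) (Dvd.dvd.mul_right (Dvd.intro_left _ rfl) _)
    exact Ideal.mem_of_dvd _ hdvd (Ideal.subset_span (Or.inl ⟨s, rfl⟩))
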